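/- arXiv:2303.02694 — 5 statements merged into one kernel-verified Lean document; each statement's English description precedes it below -/
import Mathlib

section
/- Let u be an analytic function on an open subset U of ℂ³ (with coordinates (x₁,x₂,η)) on which η ≠ 0. Then u satisfies the three equations P₁u = 0, P₂u = 0, P₃u = 0 if and only if u satisfies the two equations Q₁u = 0, Q₂u = 0. -/
/-- Partial derivative in the first variable `x₁`. -/
noncomputable def D1 (f : ℂ → ℂ → ℂ → ℂ) : ℂ → ℂ → ℂ → ℂ :=
  fun a b c => deriv (fun w => f w b c) a

/-- Partial derivative in the second variable `x₂`. -/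
noncomputable def D2 (f : ℂ → ℂ → ℂ → ℂ) : ℂ → ℂ → ℂ → ℂ :=
  fun a b c => deriv (fun w => f a w c) b

/-- `P₁ = 4∂₁∂₂ + 2ηx₂∂₁ + η²x₁`. -/
noncomputable def P1 (f : ℂ → ℂ → ℂ → ℂ) : ℂ → ℂ → ℂ → ℂ :=
  fun a b c => 4 * D1 (D2 f) a b c + 2 * c * b * D1 f a b c + c ^ 2 * a * f a b c

/-- `P₂ = 4∂₂² + ηx₁∂₁ + 2ηx₂∂₂ + η`. -/
noncomputable def P2 (f : ℂ → ℂ → ℂ → ℂ) : ℂ → ℂ → ℂ → ℂ :=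
  fun a b c => 4 * D2 (D2 f) a b c + c * a * D1 f a b c + 2 * c * b * D2 f a b c + c * f a b c

/-- `P₃ = η∂₂ − ∂₁²`. -/
noncomputable def P3 (f : ℂ → ℂ → ℂ → ℂ) : ℂ → ℂ → ℂ → ℂ :=
  fun a b c => c * D2 f a b c - D1 (D1 f) a b c

/-- `Q₁ = 4∂₁³ + 2η²x₂∂₁ + η³x₁`. -/
noncomputable def Q1 (f : ℂ → ℂ → ℂ → ℂ) : ℂ → ℂ → ℂ → ℂ :=
  fun a b c => 4 * D1 (D1 (D1 f)) a b c + 2 * c ^ 2 * b * D1 f a b c + c ^ 3 * a * f a b c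

/-- `Q₂ = η∂₂ − ∂₁²`. -/
noncomputable def Q2 (f : ℂ → ℂ → ℂ → ℂ) : ℂ → ℂ → ℂ → ℂ := P3 f

/-! Written as `η ∂₂u = ∂₁²u`, the equation `Q₂u = 0` can be differentiated in `x₁` and `x₂`
termwise, since its coefficient `η` depends on neither. The `x₁`-derivative gives
`η ∂₁∂₂u = ∂₁³u`, hence `Q₁u = η P₁u`; by symmetry of mixed partials it says that `∂₁u`, and then
`∂₁²u`, satisfy `Q₂ = 0` as well, and combined with the `x₂`-derivative this yields
`η² P₂u = ∂₁(Q₁u)`. Since `η ≠ 0`, the two systems therefore vanish together. -/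

open Set Function

theorem fderiv_eq_fderiv_fderiv_apply {𝕜 E F : Type*} [NontriviallyNormedField 𝕜]
    [NormedAddCommGroup E] [NormedSpace 𝕜 E] [NormedAddCommGroup F] [NormedSpace 𝕜 F]
    [CompleteSpace F] {U : Set E} (hU : IsOpen U) {G g : E → F} {p : E}
    (hG : AnalyticOnNhd 𝕜 G U) (w : E) (hg : EqOn g (fun q => fderiv 𝕜 G q w) U)
    (hp : p ∈ U) (v : E) :
    fderiv 𝕜 g p v = fderiv 𝕜 (fderiv 𝕜 G) p v w := by
  have hfd : HasFDerivAt (fderiv 𝕜 G) (fderiv 𝕜 (fderiv 𝕜 G) p) p :=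
    (hG.fderiv p hp).differentiableAt.hasFDerivAt
  rw [(Filter.eventuallyEq_of_mem (hU.mem_nhds hp) hg).fderiv_eq]
  exact congrArg (fun L : E →L[𝕜] F => L v)
    (((ContinuousLinearMap.apply 𝕜 F w).hasFDerivAt).comp p hfd).fderiv

section

variable {U : Set (ℂ × ℂ × ℂ)} {f g : ℂ → ℂ → ℂ → ℂ} {p : ℂ × ℂ × ℂ}

theorem hasDerivAt_slice₁ (hf : DifferentiableAt ℂ ↿f p) :
    HasDerivAt (fun w => f w p.2.1 p.2.2) (fderiv ℂ ↿f p (1, 0, 0)) p.1 :=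
  hf.hasFDerivAt.comp_hasDerivAt (f := fun w : ℂ => (w, p.2.1, p.2.2)) p.1
    ((hasDerivAt_id _).prodMk ((hasDerivAt_const _ _).prodMk (hasDerivAt_const _ _)))

theorem hasDerivAt_slice₂ (hf : DifferentiableAt ℂ ↿f p) :
    HasDerivAt (fun w => f p.1 w p.2.2) (fderiv ℂ ↿f p (0, 1, 0)) p.2.1 :=
  hf.hasFDerivAt.comp_hasDerivAt (f := fun w : ℂ => (p.1, w, p.2.2)) p.2.1
    ((hasDerivAt_const _ _).prodMk ((hasDerivAt_id _).prodMk (hasDerivAt_const _ _)))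

theorem D1_eq_fderiv (hf : DifferentiableAt ℂ ↿f p) :
    D1 f p.1 p.2.1 p.2.2 = fderiv ℂ ↿f p (1, 0, 0) :=
  (hasDerivAt_slice₁ hf).deriv

theorem D2_eq_fderiv (hf : DifferentiableAt ℂ ↿f p) :
    D2 f p.1 p.2.1 p.2.2 = fderiv ℂ ↿f p (0, 1, 0) :=
  (hasDerivAt_slice₂ hf).deriv

theorem hasDerivAt_D1 (hf : DifferentiableAt ℂ ↿f p) :
    HasDerivAt (fun w => f w p.2.1 p.2.2) (D1 f p.1 p.2.1 p.2.2) p.1 :=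
  D1_eq_fderiv hf ▸ hasDerivAt_slice₁ hf

theorem D1_const_mul (k : ℂ → ℂ → ℂ) :
    D1 (fun a b c => k b c * f a b c) = fun a b c => k b c * D1 f a b c := by
  funext a b c
  exact congrFun (deriv_const_mul_field' (k b c)) a

theorem D2_const_mul (k : ℂ → ℂ → ℂ) :
    D2 (fun a b c => k a c * f a b c) = fun a b c => k a c * D2 f a b c := by
  funext a b c
  exact congrFun (deriv_const_mul_field' (k a c)) b

variable (hU : IsOpen U)
include hU

theorem D1_congr (h : EqOn ↿f ↿g U) : EqOn ↿(D1 f) ↿(D1 g) U := by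
  intro p hp
  refine Filter.EventuallyEq.deriv_eq ?_
  have hslice : IsOpen {w : ℂ | (w, p.2.1, p.2.2) ∈ U} := hU.preimage (by fun_prop)
  filter_upwards [hslice.mem_nhds hp] with w hw using h hw

theorem D2_congr (h : EqOn ↿f ↿g U) : EqOn ↿(D2 f) ↿(D2 g) U := by
  intro p hp
  refine Filter.EventuallyEq.deriv_eq ?_
  have hslice : IsOpen {w : ℂ | (p.1, w, p.2.2) ∈ U} := hU.preimage (by fun_prop)
  filter_upwards [hslice.mem_nhds hp] with w hw using h hw

theorem D1_eqOn_zero (h : EqOn ↿f 0 U) : EqOn ↿(D1 f) 0 U := by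
  intro p hp
  rw [D1_congr hU (g := 0) h hp]
  exact deriv_const _ _

theorem AnalyticOnNhd.D1 (hf : AnalyticOnNhd ℂ ↿f U) : AnalyticOnNhd ℂ ↿(D1 f) U :=
  ((ContinuousLinearMap.apply ℂ ℂ ((1, 0, 0) : ℂ × ℂ × ℂ)).comp_analyticOnNhd hf.fderiv).congr
    hU fun _ hp => (D1_eq_fderiv (hf _ hp).differentiableAt).symm

theorem AnalyticOnNhd.D2 (hf : AnalyticOnNhd ℂ ↿f U) : AnalyticOnNhd ℂ ↿(D2 f) U :=
  ((ContinuousLinearMap.apply ℂ ℂ ((0, 1, 0) : ℂ × ℂ × ℂ)).comp_analyticOnNhd hf.fderiv).congr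
    hU fun _ hp => (D2_eq_fderiv (hf _ hp).differentiableAt).symm

theorem D1_D2_comm (hf : AnalyticOnNhd ℂ ↿f U) : EqOn ↿(D1 (D2 f)) ↿(D2 (D1 f)) U := by
  intro p hp
  have h12 := fderiv_eq_fderiv_fderiv_apply hU (g := ↿(D2 f)) hf (0, 1, 0)
    (fun q hq => D2_eq_fderiv (hf q hq).differentiableAt) hp (1, 0, 0)
  have h21 := fderiv_eq_fderiv_fderiv_apply hU (g := ↿(D1 f)) hf (1, 0, 0)
    (fun q hq => D1_eq_fderiv (hf q hq).differentiableAt) hp (0, 1, 0)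
  have hsymm : IsSymmSndFDerivAt ℂ ↿f p :=
    (hf p hp).contDiffAt.isSymmSndFDerivAt_of_omega
  change D1 (D2 f) p.1 p.2.1 p.2.2 = D2 (D1 f) p.1 p.2.1 p.2.2
  rw [D1_eq_fderiv ((hf.D2 hU) p hp).differentiableAt,
    D2_eq_fderiv ((hf.D1 hU) p hp).differentiableAt, h12, h21, hsymm]

theorem D1_Q1 (hf : AnalyticOnNhd ℂ ↿f U) (hp : p ∈ U) :
    D1 (Q1 f) p.1 p.2.1 p.2.2 = 4 * D1 (D1 (D1 (D1 f))) p.1 p.2.1 p.2.2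
      + 2 * p.2.2 ^ 2 * p.2.1 * D1 (D1 f) p.1 p.2.1 p.2.2
      + p.2.2 ^ 3 * f p.1 p.2.1 p.2.2 + p.2.2 ^ 3 * p.1 * D1 f p.1 p.2.1 p.2.2 := by
  have h0 := hasDerivAt_D1 (hf p hp).differentiableAt
  have h1 := hasDerivAt_D1 (hf.D1 hU p hp).differentiableAt
  have h3 := hasDerivAt_D1 ((hf.D1 hU).D1 hU |>.D1 hU p hp).differentiableAt
  have hQ1 : HasDerivAt (fun w => Q1 f w p.2.1 p.2.2) _ p.1 :=
    ((h3.const_mul 4).add (h1.const_mul (2 * p.2.2 ^ 2 * p.2.1))).add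
      (((hasDerivAt_id' p.1).const_mul (p.2.2 ^ 3)).mul h0)
  rw [D1, hQ1.deriv]
  ring

end

/-- `Q₂ f = 0` on `U`, in the form `η ∂₂f = ∂₁²f`, whose two sides can be differentiated without
any regularity assumption. -/
def HeatEqOn (U : Set (ℂ × ℂ × ℂ)) (f : ℂ → ℂ → ℂ → ℂ) : Prop :=
  EqOn ↿(fun a b c => c * D2 f a b c) ↿(D1 (D1 f)) U

namespace HeatEqOn

variable {U : Set (ℂ × ℂ × ℂ)} {f : ℂ → ℂ → ℂ → ℂ} {p : ℂ × ℂ × ℂ}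

theorem of_Q2_eq_zero (h : ∀ p ∈ U, Q2 f p.1 p.2.1 p.2.2 = 0) : HeatEqOn U f :=
  fun p hp => sub_eq_zero.mp (h p hp)

variable (hU : IsOpen U)
include hU

theorem D1_D2 (h : HeatEqOn U f) :
    EqOn ↿(fun a b c => c * D1 (D2 f) a b c) ↿(D1 (D1 (D1 f))) U := by
  have := D1_congr hU h
  rwa [D1_const_mul (fun _ c => c)] at this

theorem D2_D2 (h : HeatEqOn U f) :
    EqOn ↿(fun a b c => c * D2 (D2 f) a b c) ↿(D2 (D1 (D1 f))) U := by
  have := D2_congr hU h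
  rwa [D2_const_mul (fun _ c => c)] at this

theorem Q1_eq_mul_P1 (h : HeatEqOn U f) (hp : p ∈ U) :
    Q1 f p.1 p.2.1 p.2.2 = p.2.2 * P1 f p.1 p.2.1 p.2.2 := by
  have h12 : p.2.2 * D1 (D2 f) p.1 p.2.1 p.2.2 = D1 (D1 (D1 f)) p.1 p.2.1 p.2.2 :=
    h.D1_D2 hU hp
  unfold Q1 P1
  linear_combination (-4) * h12

end HeatEqOn

section

variable {U : Set (ℂ × ℂ × ℂ)} {f : ℂ → ℂ → ℂ → ℂ} {p : ℂ × ℂ × ℂ} (hU : IsOpen U)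
include hU

theorem heatEqOn_D1 (h : HeatEqOn U f) (hf : AnalyticOnNhd ℂ ↿f U) : HeatEqOn U (D1 f) := by
  intro p hp
  have hcomm : D1 (D2 f) p.1 p.2.1 p.2.2 = D2 (D1 f) p.1 p.2.1 p.2.2 := D1_D2_comm hU hf hp
  change p.2.2 * D2 (D1 f) p.1 p.2.1 p.2.2 = _
  rw [← hcomm]
  exact h.D1_D2 hU hp

theorem HeatEqOn.sq_mul_P2_eq_D1_Q1 (h : HeatEqOn U f) (hf : AnalyticOnNhd ℂ ↿f U)
    (hp : p ∈ U) : p.2.2 ^ 2 * P2 f p.1 p.2.1 p.2.2 = D1 (Q1 f) p.1 p.2.1 p.2.2 := by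
  have h0 : p.2.2 * D2 f p.1 p.2.1 p.2.2 = D1 (D1 f) p.1 p.2.1 p.2.2 := h hp
  have h22 : p.2.2 * D2 (D2 f) p.1 p.2.1 p.2.2 = D2 (D1 (D1 f)) p.1 p.2.1 p.2.2 :=
    h.D2_D2 hU hp
  have h4 : p.2.2 * D2 (D1 (D1 f)) p.1 p.2.1 p.2.2 = D1 (D1 (D1 (D1 f))) p.1 p.2.1 p.2.2 :=
    heatEqOn_D1 hU (heatEqOn_D1 hU h hf) (hf.D1 hU) hp
  rw [D1_Q1 hU hf hp]
  unfold P2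
  linear_combination 4 * p.2.2 * h22 + 4 * h4 + 2 * p.2.2 ^ 2 * p.2.1 * h0

end

/-- For an analytic function `u` on an open set where `η ≠ 0`, the system
`P₁u = P₂u = P₃u = 0` is equivalent to the system `Q₁u = Q₂u = 0`. -/
theorem pearcey_system_equivalence
    (U : Set (ℂ × ℂ × ℂ)) (hU : IsOpen U)
    (hη : ∀ p : ℂ × ℂ × ℂ, p ∈ U → p.2.2 ≠ 0)
    (u : ℂ → ℂ → ℂ → ℂ)
    (hu : AnalyticOnNhd ℂ (fun p : ℂ × ℂ × ℂ => u p.1 p.2.1 p.2.2) U) :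
    (∀ p : ℂ × ℂ × ℂ, p ∈ U →
        P1 u p.1 p.2.1 p.2.2 = 0 ∧ P2 u p.1 p.2.1 p.2.2 = 0 ∧ P3 u p.1 p.2.1 p.2.2 = 0)
      ↔ (∀ p : ℂ × ℂ × ℂ, p ∈ U →
        Q1 u p.1 p.2.1 p.2.2 = 0 ∧ Q2 u p.1 p.2.1 p.2.2 = 0) := by
  constructor
  · intro h p hp
    have heat : HeatEqOn U u := .of_Q2_eq_zero fun q hq => (h q hq).2.2
    refine ⟨?_, (h p hp).2.2⟩
    rw [heat.Q1_eq_mul_P1 hU hp, (h p hp).1, mul_zero]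
  · intro h p hp
    have heat : HeatEqOn U u := .of_Q2_eq_zero fun q hq => (h q hq).2
    have hQ1 : EqOn ↿(Q1 u) 0 U := fun q hq => (h q hq).1
    have hP1 : p.2.2 * P1 u p.1 p.2.1 p.2.2 = 0 :=
      (heat.Q1_eq_mul_P1 hU hp).symm.trans (h p hp).1
    have hP2 : p.2.2 ^ 2 * P2 u p.1 p.2.1 p.2.2 = 0 :=
      (heat.sq_mul_P2_eq_D1_Q1 hU hu hp).trans (D1_eqOn_zero hU hQ1 hp)
    exact ⟨(mul_eq_zero.mp hP1).resolve_left (hη p hp),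
      (mul_eq_zero.mp hP2).resolve_left (pow_ne_zero 2 (hη p hp)), (h p hp).2⟩
end

section
/- For (x₁,x₂,η) ∈ ℂ² × {η ∈ ℂ : Re η < 0}, the Pearcey integral u(x₁,x₂,η) = ∫_{−∞}^{∞} exp(η(z⁴ + x₂z² + x₁z)) dz converges absolutely, defines an analytic function of (x₁,x₂,η), and satisfies the system P₁u = 0, P₂u = 0, P₃u = 0. -/
open MeasureTheory

/-- The Pearcey integral with large parameter `η`:
`u(x₁,x₂,η) = ∫_{-∞}^{∞} exp(η(z⁴ + x₂z² + x₁z)) dz`. -/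
noncomputable def pearcey (x₁ x₂ η : ℂ) : ℂ :=
  ∫ z : ℝ, Complex.exp (η * ((z : ℂ) ^ 4 + x₂ * (z : ℂ) ^ 2 + x₁ * (z : ℂ)))

/-!
Write `E(z) = exp (η (z⁴ + x₂ z² + x₁ z))` and `Iₘ = ∫ zᵐ E`. For `Re η < 0` the quartic term
dominates, `|zᵐ E| ≤ C exp (-z²)` locally uniformly in the parameters, which gives integrability and
justifies differentiation under the integral sign: `∂₁ Iₘ = η Iₘ₊₁` and `∂₂ Iₘ = η Iₘ₊₂`.
Integrating the exact derivatives `E'` and `(z E)'` over `ℝ` gives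
`η (4 I₃ + 2 x₂ I₁ + x₁ I₀) = 0` and `I₀ + η (4 I₄ + 2 x₂ I₂ + x₁ I₁) = 0`, which are `P₁ u = 0` and
`P₂ u = 0` after multiplying by `η`; and `P₃ u = η² I₂ - η² I₂ = 0`.

Joint analyticity is obtained without Hartogs' theorem. Near a point where `η = 4c`,
`u = ∫ exp (c z⁴) F₄(η - 4c) F₂(η x₂) F₁(η x₁) dz` with `Fₖ(y) = exp (c z⁴ + y zᵏ)`. Each `Fₖ` is a
holomorphic function of one variable with values in the Banach algebra of bounded continuous
functions on `ℝ`, so their product is analytic on `ℂ³`, and integration against the integrable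
weight `exp (c z⁴)` is a continuous linear functional.
-/

open Complex Filter Topology Metric
open scoped BoundedContinuousFunction

theorem exists_quartic_le_neg_sq {a : ℝ} (ha : a < 0) (b c : ℝ) :
    ∃ K, ∀ t : ℝ, a * t ^ 4 + b * t ^ 2 + c * |t| ≤ -t ^ 2 + K := by
  -- complete the square in `t²`, and `c |t| ≤ c² / 2 + t² / 2`
  refine ⟨(b + 3 / 2) ^ 2 / (-4 * a) + c ^ 2 / 2, fun t => ?_⟩
  have hdiv : (b + 3 / 2) ^ 2 / (-4 * a) * (-4 * a) = (b + 3 / 2) ^ 2 :=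
    div_mul_cancel₀ _ (by linarith)
  rw [← sq_abs t, show t ^ 4 = |t| ^ 4 by rw [← abs_pow, abs_of_nonneg (by positivity)]]
  nlinarith [sq_nonneg (2 * a * |t| ^ 2 + (b + 3 / 2)), sq_nonneg (|t| - c), abs_nonneg t]

theorem integrable_exp_quartic {a : ℝ} (ha : a < 0) (b c : ℝ) :
    Integrable fun t : ℝ => Real.exp (a * t ^ 4 + b * t ^ 2 + c * |t|) := by
  obtain ⟨K, hK⟩ := exists_quartic_le_neg_sq ha b c
  refine ((integrable_exp_neg_mul_sq one_pos).const_mul (Real.exp K)).mono'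
    (by fun_prop) (ae_of_all _ fun t => ?_)
  rw [Real.norm_of_nonneg (Real.exp_nonneg _), ← Real.exp_add]
  exact Real.exp_le_exp.2 (by linarith [hK t])

theorem pow_abs_le_exp (n : ℕ) (t : ℝ) : |t| ^ n ≤ Real.exp (n * |t|) := by
  rw [Real.exp_nat_mul]
  gcongr
  linarith [Real.add_one_le_exp |t|]

theorem integrable_of_norm_le_pow_mul_exp_quartic {E : Type*} [NormedAddCommGroup E]
    {f : ℝ → E} (hf : AEStronglyMeasurable f) {a : ℝ} (ha : a < 0) (b c : ℝ) (n : ℕ)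
    (hle : ∀ t, ‖f t‖ ≤ |t| ^ n * Real.exp (a * t ^ 4 + b * t ^ 2 + c * |t|)) :
    Integrable f := by
  refine (integrable_exp_quartic ha b (c + n)).mono' hf (ae_of_all _ fun t => (hle t).trans ?_)
  calc |t| ^ n * Real.exp (a * t ^ 4 + b * t ^ 2 + c * |t|)
      ≤ Real.exp (n * |t|) * Real.exp (a * t ^ 4 + b * t ^ 2 + c * |t|) := by
        gcongr; exact pow_abs_le_exp n t
    _ = _ := by rw [← Real.exp_add]; ring_nf

theorem norm_cexp_quartic_le (u v w : ℂ) (t : ℝ) :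
    ‖cexp (u * t ^ 4 + v * t ^ 2 + w * t)‖ ≤ Real.exp (u.re * t ^ 4 + ‖v‖ * t ^ 2 + ‖w‖ * |t|) := by
  rw [norm_exp, Real.exp_le_exp]
  simp only [add_re, ← ofReal_pow, re_mul_ofReal]
  have hv : v.re * t ^ 2 ≤ ‖v‖ * t ^ 2 := by gcongr; exact re_le_norm v
  have hw : w.re * t ≤ ‖w‖ * |t| :=
    (le_abs_self _).trans (by rw [abs_mul]; gcongr; exact abs_re_le_norm w)
  linarith

theorem le_inv_mul_exp_mul {δ : ℝ} (hδ : 0 < δ) (t : ℝ) : t ≤ δ⁻¹ * Real.exp (δ * t) := by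
  rw [le_inv_mul_iff₀ hδ]
  linarith [Real.add_one_le_exp (δ * t)]

theorem hasDerivAt_integral_mul_cexp {α : Type*} [MeasurableSpace α] {μ : Measure α}
    {g p : α → ℂ} (hg : AEStronglyMeasurable g μ) (hp : AEStronglyMeasurable p μ)
    {y₀ : ℂ} {R : ℝ} (hR : ‖y₀‖ < R)
    (hint : Integrable (fun x => ‖g x‖ * Real.exp (R * ‖p x‖)) μ) :
    HasDerivAt (fun y => ∫ x, g x * cexp (y * p x) ∂μ)
      (∫ x, p x * (g x * cexp (y₀ * p x)) ∂μ) y₀ := by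
  set δ := (R - ‖y₀‖) / 2 with hδ
  have hδpos : 0 < δ := by rw [hδ]; linarith
  have hmeas (y : ℂ) : AEStronglyMeasurable (fun x => g x * cexp (y * p x)) μ :=
    hg.mul ((continuous_exp.comp (continuous_const_mul y)).comp_aestronglyMeasurable hp)
  have hint₀ : Integrable (fun x => g x * cexp (y₀ * p x)) μ :=
    hint.mono' (hmeas y₀) (ae_of_all _ fun x => by
      rw [norm_mul]
      gcongr
      refine (norm_exp_le_exp_norm _).trans (Real.exp_le_exp.2 ?_)
      rw [norm_mul]; gcongr)
  have hball : ∀ y ∈ ball y₀ δ, ‖y‖ ≤ R - δ := fun y hy => by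
    have := norm_le_norm_add_norm_sub' y y₀
    rw [mem_ball, dist_eq_norm] at hy
    linarith
  refine (hasDerivAt_integral_of_dominated_loc_of_deriv_le (ball_mem_nhds y₀ hδpos)
    (Eventually.of_forall hmeas) hint₀ (F' := fun y x => p x * (g x * cexp (y * p x)))
    (hp.mul (hmeas y₀))
    (bound := fun x => δ⁻¹ * (‖g x‖ * Real.exp (R * ‖p x‖))) ?_ (hint.const_mul δ⁻¹)
    (ae_of_all _ fun x y _ => ?_)).2
  · refine ae_of_all _ fun x y hy => ?_
    rw [norm_mul, norm_mul]
    calc ‖p x‖ * (‖g x‖ * ‖cexp (y * p x)‖)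
        ≤ δ⁻¹ * Real.exp (δ * ‖p x‖) * (‖g x‖ * Real.exp ((R - δ) * ‖p x‖)) := by
          gcongr
          · exact le_inv_mul_exp_mul hδpos _
          · refine (norm_exp_le_exp_norm _).trans (Real.exp_le_exp.2 ?_)
            rw [norm_mul]; gcongr; exact hball y hy
      _ = δ⁻¹ * (‖g x‖ * Real.exp (R * ‖p x‖)) := by
          rw [mul_mul_mul_comm, ← Real.exp_add]; ring_nf
  · simpa [mul_comm, mul_left_comm] using
      ((hasDerivAt_id y).mul_const (p x)).cexp.const_mul (g x)

noncomputable def pearceyKernel (x₁ x₂ η : ℂ) (z : ℝ) : ℂ :=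
  cexp (η * ((z : ℂ) ^ 4 + x₂ * (z : ℂ) ^ 2 + x₁ * (z : ℂ)))

noncomputable def pearceyMoment (m : ℕ) (x₁ x₂ η : ℂ) : ℂ :=
  ∫ z : ℝ, (z : ℂ) ^ m * pearceyKernel x₁ x₂ η z

theorem pearcey_eq_pearceyMoment_zero : pearcey = pearceyMoment 0 := by
  ext x₁ x₂ η
  simp [pearcey, pearceyMoment, pearceyKernel]

theorem pearceyKernel_fst_eq (w x₁ x₂ η : ℂ) (z : ℝ) :
    pearceyKernel w x₂ η z = pearceyKernel x₁ x₂ η z * cexp ((w - x₁) * (η * z)) := by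
  rw [pearceyKernel, pearceyKernel, ← Complex.exp_add]; ring_nf

theorem pearceyKernel_snd_eq (w x₁ x₂ η : ℂ) (z : ℝ) :
    pearceyKernel x₁ w η z = pearceyKernel x₁ x₂ η z * cexp ((w - x₂) * (η * z ^ 2)) := by
  rw [pearceyKernel, pearceyKernel, ← Complex.exp_add]; ring_nf

theorem norm_pow_mul_pearceyKernel_le (m : ℕ) (x₁ x₂ η : ℂ) (z : ℝ) :
    ‖(z : ℂ) ^ m * pearceyKernel x₁ x₂ η z‖
      ≤ |z| ^ m * Real.exp (η.re * z ^ 4 + ‖η * x₂‖ * z ^ 2 + ‖η * x₁‖ * |z|) := by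
  rw [norm_mul, norm_pow, norm_real, Real.norm_eq_abs, pearceyKernel,
    show η * ((z : ℂ) ^ 4 + x₂ * (z : ℂ) ^ 2 + x₁ * (z : ℂ))
      = η * (z : ℂ) ^ 4 + (η * x₂) * (z : ℂ) ^ 2 + (η * x₁) * z by ring]
  gcongr
  exact norm_cexp_quartic_le _ _ _ z

theorem hasDerivAt_pearceyKernel (x₁ x₂ η : ℂ) (z : ℝ) :
    HasDerivAt (pearceyKernel x₁ x₂ η)
      (η * (4 * (z : ℂ) ^ 3 + 2 * x₂ * z + x₁) * pearceyKernel x₁ x₂ η z) z := by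
  have hpoly : HasDerivAt (fun w : ℂ => η * (w ^ 4 + x₂ * w ^ 2 + x₁ * w))
      (η * (4 * (z : ℂ) ^ 3 + 2 * x₂ * z + x₁)) z := by
    refine ((((hasDerivAt_pow 4 (z : ℂ)).add ((hasDerivAt_pow 2 (z : ℂ)).const_mul x₂)).add
      ((hasDerivAt_id (z : ℂ)).const_mul x₁)).const_mul η).congr_deriv ?_
    push_cast; ring
  rw [mul_comm]
  exact hpoly.cexp.comp_ofReal

section Moments

variable {η : ℂ} (hη : η.re < 0) (x₁ x₂ : ℂ)
include hη

theorem integrable_pow_mul_pearceyKernel (m : ℕ) :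
    Integrable fun z : ℝ => (z : ℂ) ^ m * pearceyKernel x₁ x₂ η z :=
  integrable_of_norm_le_pow_mul_exp_quartic (by unfold pearceyKernel; fun_prop) hη _ _ m
    (norm_pow_mul_pearceyKernel_le m x₁ x₂ η)

theorem hasDerivAt_integral_pearceyKernel_mul_cexp (m k : ℕ) (hk₁ : 1 ≤ k) (hk₂ : k ≤ 2) :
    HasDerivAt (fun y => ∫ z : ℝ,
        (z : ℂ) ^ m * pearceyKernel x₁ x₂ η z * cexp (y * (η * (z : ℂ) ^ k)))
      (η * pearceyMoment (m + k) x₁ x₂ η) 0 := by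
  have hpow : ∀ z : ℝ, |z| ^ k ≤ z ^ 2 + |z| := fun z => by
    interval_cases k
    · simpa using sq_nonneg z
    · simp
  have hint : Integrable fun z : ℝ =>
      ‖(z : ℂ) ^ m * pearceyKernel x₁ x₂ η z‖ * Real.exp (1 * ‖η * (z : ℂ) ^ k‖) := by
    refine integrable_of_norm_le_pow_mul_exp_quartic (by unfold pearceyKernel; fun_prop) hη
      (‖η * x₂‖ + ‖η‖) (‖η * x₁‖ + ‖η‖) m fun z => ?_
    rw [Real.norm_of_nonneg (by positivity), one_mul, norm_mul η, norm_pow, norm_real,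
      Real.norm_eq_abs]
    calc _ ≤ |z| ^ m * Real.exp (η.re * z ^ 4 + ‖η * x₂‖ * z ^ 2 + ‖η * x₁‖ * |z|)
          * Real.exp (‖η‖ * (z ^ 2 + |z|)) := by
          gcongr
          · exact norm_pow_mul_pearceyKernel_le m x₁ x₂ η z
          · exact hpow z
      _ = _ := by rw [mul_assoc, ← Real.exp_add]; ring_nf
  have hval : η * pearceyMoment (m + k) x₁ x₂ η = ∫ z : ℝ,
      η * (z : ℂ) ^ k * ((z : ℂ) ^ m * pearceyKernel x₁ x₂ η z * cexp (0 * (η * (z : ℂ) ^ k))) := by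
    rw [pearceyMoment, ← integral_const_mul]
    congr 1 with z
    simp only [zero_mul, Complex.exp_zero, mul_one]
    ring
  rw [hval]
  exact hasDerivAt_integral_mul_cexp (by unfold pearceyKernel; fun_prop) (by fun_prop)
    (by simp) hint

theorem hasDerivAt_pearceyMoment_fst (m : ℕ) :
    HasDerivAt (fun w => pearceyMoment m w x₂ η) (η * pearceyMoment (m + 1) x₁ x₂ η) x₁ := by
  have hfun : (fun w => pearceyMoment m w x₂ η) = fun w => ∫ z : ℝ,
      (z : ℂ) ^ m * pearceyKernel x₁ x₂ η z * cexp ((w - x₁) * (η * (z : ℂ) ^ 1)) := by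
    funext w
    simp_rw [pearceyMoment, pearceyKernel_fst_eq w x₁, mul_assoc, pow_one]
  rw [hfun]
  exact HasDerivAt.comp_sub_const x₁ x₁ (by
    rw [sub_self]; exact hasDerivAt_integral_pearceyKernel_mul_cexp hη x₁ x₂ m 1 le_rfl one_le_two)

theorem hasDerivAt_pearceyMoment_snd (m : ℕ) :
    HasDerivAt (fun w => pearceyMoment m x₁ w η) (η * pearceyMoment (m + 2) x₁ x₂ η) x₂ := by
  have hfun : (fun w => pearceyMoment m x₁ w η) = fun w => ∫ z : ℝ,
      (z : ℂ) ^ m * pearceyKernel x₁ x₂ η z * cexp ((w - x₂) * (η * (z : ℂ) ^ 2)) := by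
    funext w
    simp_rw [pearceyMoment, pearceyKernel_snd_eq w x₁ x₂, mul_assoc]
  rw [hfun]
  exact HasDerivAt.comp_sub_const x₂ x₂ (by
    rw [sub_self]; exact hasDerivAt_integral_pearceyKernel_mul_cexp hη x₁ x₂ m 2 one_le_two le_rfl)

-- `∫ (zʲ E)' = 0`; at `j = 0` the truncated index `j - 1` only occurs with the factor `0`.
theorem pearceyMoment_recurrence (j : ℕ) :
    j * pearceyMoment (j - 1) x₁ x₂ η + η * (4 * pearceyMoment (j + 3) x₁ x₂ η
      + 2 * x₂ * pearceyMoment (j + 1) x₁ x₂ η + x₁ * pearceyMoment j x₁ x₂ η) = 0 := by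
  have hI (m : ℕ) (c : ℂ) := (integrable_pow_mul_pearceyKernel hη x₁ x₂ m).const_mul c
  have hderiv (z : ℝ) : HasDerivAt (fun t : ℝ => (t : ℂ) ^ j * pearceyKernel x₁ x₂ η t)
      (j * ((z : ℂ) ^ (j - 1) * pearceyKernel x₁ x₂ η z)
        + 4 * η * ((z : ℂ) ^ (j + 3) * pearceyKernel x₁ x₂ η z)
        + 2 * η * x₂ * ((z : ℂ) ^ (j + 1) * pearceyKernel x₁ x₂ η z)
        + η * x₁ * ((z : ℂ) ^ j * pearceyKernel x₁ x₂ η z)) z := by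
    refine (((hasDerivAt_pow j (z : ℂ)).comp_ofReal).mul
      (hasDerivAt_pearceyKernel x₁ x₂ η z)).congr_deriv ?_
    ring
  have hzero := integral_eq_zero_of_hasDerivAt_of_integrable hderiv
    ((((hI _ _).add (hI _ _)).add (hI _ _)).add (hI _ _))
    (by simpa using hI j 1)
  rw [integral_add ?_ (hI _ _), integral_add ?_ (hI _ _), integral_add (hI _ _) (hI _ _)]
    at hzero
  · simp only [integral_const_mul] at hzero
    unfold pearceyMoment
    linear_combination hzero
  · exact (hI _ _).add (hI _ _)
  · exact ((hI _ _).add (hI _ _)).add (hI _ _)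

theorem D1_pearceyMoment (m : ℕ) :
    D1 (pearceyMoment m) x₁ x₂ η = η * pearceyMoment (m + 1) x₁ x₂ η :=
  (hasDerivAt_pearceyMoment_fst hη x₁ x₂ m).deriv

theorem D2_pearceyMoment (m : ℕ) :
    D2 (pearceyMoment m) x₁ x₂ η = η * pearceyMoment (m + 2) x₁ x₂ η :=
  (hasDerivAt_pearceyMoment_snd hη x₁ x₂ m).deriv

theorem D1_D1_pearceyMoment (m : ℕ) :
    D1 (D1 (pearceyMoment m)) x₁ x₂ η = η * (η * pearceyMoment (m + 2) x₁ x₂ η) := by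
  change deriv (fun w => D1 (pearceyMoment m) w x₂ η) x₁ = _
  simp_rw [D1_pearceyMoment hη _ x₂]
  exact ((hasDerivAt_pearceyMoment_fst hη x₁ x₂ (m + 1)).const_mul η).deriv

theorem D1_D2_pearceyMoment (m : ℕ) :
    D1 (D2 (pearceyMoment m)) x₁ x₂ η = η * (η * pearceyMoment (m + 3) x₁ x₂ η) := by
  change deriv (fun w => D2 (pearceyMoment m) w x₂ η) x₁ = _
  simp_rw [D2_pearceyMoment hη _ x₂]
  exact ((hasDerivAt_pearceyMoment_fst hη x₁ x₂ (m + 2)).const_mul η).deriv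

theorem D2_D2_pearceyMoment (m : ℕ) :
    D2 (D2 (pearceyMoment m)) x₁ x₂ η = η * (η * pearceyMoment (m + 4) x₁ x₂ η) := by
  change deriv (fun w => D2 (pearceyMoment m) x₁ w η) x₂ = _
  simp_rw [D2_pearceyMoment hη x₁]
  exact ((hasDerivAt_pearceyMoment_snd hη x₁ x₂ (m + 2)).const_mul η).deriv

theorem pearcey_pde :
    P1 pearcey x₁ x₂ η = 0 ∧ P2 pearcey x₁ x₂ η = 0 ∧ P3 pearcey x₁ x₂ η = 0 := by
  have r₀ := pearceyMoment_recurrence hη x₁ x₂ 0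
  have r₁ := pearceyMoment_recurrence hη x₁ x₂ 1
  rw [pearcey_eq_pearceyMoment_zero]
  refine ⟨?_, ?_, ?_⟩
  · rw [P1, D1_D2_pearceyMoment hη, D1_pearceyMoment hη]
    linear_combination η * r₀
  · rw [P2, D2_D2_pearceyMoment hη, D1_pearceyMoment hη, D2_pearceyMoment hη]
    linear_combination η * r₁
  · rw [P3, D2_pearceyMoment hη, D1_D1_pearceyMoment hη]
    ring

end Moments

theorem hasDerivAt_of_norm_sub_le_sq {𝕜 F : Type*} [NontriviallyNormedField 𝕜]
    [NormedAddCommGroup F] [NormedSpace 𝕜 F] {f : 𝕜 → F} {f' : F} {x : 𝕜} {C : ℝ}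
    (h : ∀ᶠ y in 𝓝 x, ‖f y - f x - (y - x) • f'‖ ≤ C * ‖y - x‖ ^ 2) : HasDerivAt f f' x := by
  rw [hasDerivAt_iff_isLittleO]
  refine (Asymptotics.IsBigO.of_bound C (h.mono fun y hy => ?_)).trans_isLittleO
    (Asymptotics.isLittleO_pow_sub_sub x one_lt_two)
  rwa [Real.norm_of_nonneg (by positivity)]

theorem norm_mul_cexp_sub_sub_le {ε : ℝ} (hε : 0 < ε) {δ : ℂ} (hδ : ‖δ‖ ≤ ε / 2) (G t : ℂ) :
    ‖G * cexp (δ * t) - G - δ * (t * G)‖ ≤ (4 / ε) ^ 2 * (‖G‖ * Real.exp (ε * ‖t‖)) * ‖δ‖ ^ 2 := by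
  rw [show G * cexp (δ * t) - G - δ * (t * G) = G * (cexp (δ * t) - 1 - δ * t) by ring, norm_mul]
  have hrem : ‖cexp (δ * t) - 1 - δ * t‖ ≤ ‖δ * t‖ ^ 2 * Real.exp ‖δ * t‖ := by
    simpa [Finset.sum_range_succ, sub_sub] using norm_exp_sub_sum_le_norm_mul_exp (δ * t) 2
  have ht : ‖t‖ ≤ 4 / ε * Real.exp (ε / 4 * ‖t‖) := by
    simpa [inv_div] using le_inv_mul_exp_mul (by positivity : 0 < ε / 4) ‖t‖
  calc ‖G‖ * ‖cexp (δ * t) - 1 - δ * t‖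
      ≤ ‖G‖ * (‖δ‖ ^ 2 * (4 / ε * Real.exp (ε / 4 * ‖t‖)) ^ 2 * Real.exp (ε / 2 * ‖t‖)) := by
        refine mul_le_mul_of_nonneg_left (hrem.trans ?_) (norm_nonneg G)
        rw [norm_mul, mul_pow]
        gcongr
    _ = (4 / ε) ^ 2 * (‖G‖ * (Real.exp (2 * (ε / 4 * ‖t‖)) * Real.exp (ε / 2 * ‖t‖)))
        * ‖δ‖ ^ 2 := by
        rw [mul_pow, ← Real.exp_nat_mul]; push_cast; ring
    _ = _ := by rw [← Real.exp_add]; ring_nf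

section BoundedContinuous

variable {α : Type*} [TopologicalSpace α]

open Classical in
noncomputable def toBCF {E : Type*} [SeminormedAddCommGroup E] (f : α → E) : α →ᵇ E :=
  if h : Continuous f ∧ ∃ C, ∀ x, ‖f x‖ ≤ C then
    .ofNormedAddCommGroup f h.1 h.2.choose h.2.choose_spec
  else 0

theorem coe_toBCF {E : Type*} [SeminormedAddCommGroup E] {f : α → E} (hf : Continuous f)
    (hb : ∃ C, ∀ x, ‖f x‖ ≤ C) : ⇑(toBCF f) = f := by
  rw [toBCF, dif_pos ⟨hf, hb⟩]
  rfl

variable {g p : α → ℂ} (hg : Continuous g) (hp : Continuous p)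
include hg hp

theorem coe_toBCF_mul_cexp {y : ℂ} {ε M : ℝ} (hε : 0 ≤ ε)
    (hM : ∀ x, ‖g x * cexp (y * p x)‖ * Real.exp (ε * ‖p x‖) ≤ M) :
    ⇑(toBCF fun x => g x * cexp (y * p x)) = fun x => g x * cexp (y * p x) :=
  coe_toBCF (by fun_prop) ⟨M, fun x => (le_mul_of_one_le_right (norm_nonneg _)
    (Real.one_le_exp (by positivity))).trans (hM x)⟩

theorem hasDerivAt_toBCF_mul_cexp {y₀ : ℂ} {ε M : ℝ} (hε : 0 < ε)
    (hM : ∀ x, ‖g x * cexp (y₀ * p x)‖ * Real.exp (ε * ‖p x‖) ≤ M) :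
    HasDerivAt (fun y => toBCF fun x => g x * cexp (y * p x))
      (toBCF fun x => p x * (g x * cexp (y₀ * p x))) y₀ := by
  have hshift (y : ℂ) (x : α) :
      g x * cexp (y * p x) = g x * cexp (y₀ * p x) * cexp ((y - y₀) * p x) := by
    rw [mul_assoc, ← Complex.exp_add]; ring_nf
  have hnear (y : ℂ) (hy : ‖y - y₀‖ ≤ ε) (x : α) :
      ‖g x * cexp (y * p x)‖ * Real.exp (0 * ‖p x‖) ≤ M := by
    rw [zero_mul, Real.exp_zero, mul_one, hshift, norm_mul]
    refine le_trans ?_ (hM x)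
    gcongr
    refine (norm_exp_le_exp_norm _).trans (Real.exp_le_exp.2 ?_)
    rw [norm_mul]; gcongr
  have hderiv : ⇑(toBCF fun x => p x * (g x * cexp (y₀ * p x)))
      = fun x => p x * (g x * cexp (y₀ * p x)) := by
    refine coe_toBCF (by fun_prop) ⟨ε⁻¹ * M, fun x => ?_⟩
    rw [norm_mul]
    calc ‖p x‖ * ‖g x * cexp (y₀ * p x)‖
        ≤ ε⁻¹ * Real.exp (ε * ‖p x‖) * ‖g x * cexp (y₀ * p x)‖ := by
          gcongr; exact le_inv_mul_exp_mul hε _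
      _ = ε⁻¹ * (‖g x * cexp (y₀ * p x)‖ * Real.exp (ε * ‖p x‖)) := by ring
      _ ≤ ε⁻¹ * M := by gcongr; exact hM x
  refine hasDerivAt_of_norm_sub_le_sq (C := (4 / ε) ^ 2 * max M 0) ?_
  filter_upwards [closedBall_mem_nhds y₀ (half_pos hε)] with y hy
  rw [mem_closedBall, dist_eq_norm] at hy
  refine (BoundedContinuousFunction.norm_le (by positivity)).2 fun x => ?_
  simp only [BoundedContinuousFunction.coe_sub, BoundedContinuousFunction.coe_smul,
    Pi.sub_apply, smul_eq_mul, hderiv,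
    coe_toBCF_mul_cexp hg hp le_rfl (hnear y (hy.trans (by linarith))),
    coe_toBCF_mul_cexp hg hp hε.le hM]
  rw [hshift y x]
  exact (norm_mul_cexp_sub_sub_le hε hy _ _).trans
    (by gcongr; exact (hM x).trans (le_max_left _ _))

end BoundedContinuous

section WeightedIntegral

variable {α : Type*} [TopologicalSpace α] [MeasurableSpace α] [OpensMeasurableSpace α]
  {μ : Measure α} {w : α → ℂ}

theorem integrable_mul_bcf (hw : Integrable w μ) (f : α →ᵇ ℂ) :
    Integrable (fun x => w x * f x) μ :=
  hw.mul_bdd f.continuous.aestronglyMeasurable (ae_of_all _ f.norm_coe_le_norm)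

noncomputable def weightedIntegralCLM (w : α → ℂ) (hw : Integrable w μ) : (α →ᵇ ℂ) →L[ℂ] ℂ :=
  LinearMap.mkContinuous
    { toFun := fun f => ∫ x, w x * f x ∂μ
      map_add' := fun f f' => by
        simp only [BoundedContinuousFunction.coe_add, Pi.add_apply, mul_add]
        exact integral_add (integrable_mul_bcf hw f) (integrable_mul_bcf hw f')
      map_smul' := fun c f => by
        simp only [BoundedContinuousFunction.coe_smul, smul_eq_mul, mul_left_comm _ c,
          integral_const_mul, RingHom.id_apply] }
    (∫ x, ‖w x‖ ∂μ) fun f => by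
      refine (norm_integral_le_of_norm_le (hw.norm.mul_const ‖f‖)
        (ae_of_all _ fun x => ?_)).trans_eq (integral_mul_const _ _)
      rw [norm_mul]
      gcongr
      exact f.norm_coe_le_norm x

theorem weightedIntegralCLM_apply (hw : Integrable w μ) (f : α →ᵇ ℂ) :
    weightedIntegralCLM w hw f = ∫ x, w x * f x ∂μ := rfl

end WeightedIntegral

theorem norm_cexp_mul_ofReal_pow (y : ℂ) (k : ℕ) (z : ℝ) :
    ‖cexp (y * (z : ℂ) ^ k)‖ = Real.exp (y.re * z ^ k) := by
  rw [norm_exp, ← ofReal_pow, re_mul_ofReal]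

noncomputable def quarticExpBCF (c : ℂ) (k : ℕ) (y : ℂ) : ℝ →ᵇ ℂ :=
  toBCF fun z : ℝ => cexp (c * (z : ℂ) ^ 4) * cexp (y * (z : ℂ) ^ k)

section QuarticExp

variable {c : ℂ} (hc : c.re < 0)
include hc

theorem integrable_cexp_quartic : Integrable fun z : ℝ => cexp (c * (z : ℂ) ^ 4) :=
  integrable_of_norm_le_pow_mul_exp_quartic (by fun_prop) hc 0 0 0 fun z => by
    simp [norm_cexp_mul_ofReal_pow]

theorem exists_norm_quarticExp_mul_exp_le {k : ℕ} (hk : k ≤ 2) (y : ℂ) :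
    ∃ M, ∀ z : ℝ, ‖cexp (c * (z : ℂ) ^ 4) * cexp (y * (z : ℂ) ^ k)‖
      * Real.exp (1 * ‖(z : ℂ) ^ k‖) ≤ M := by
  obtain ⟨K, hK⟩ := exists_quartic_le_neg_sq hc (‖y‖ + 1) 0
  refine ⟨Real.exp (K + (‖y‖ + 1)), fun z => ?_⟩
  have hpow : |z| ^ k ≤ 1 + z ^ 2 := by
    rcases le_or_gt |z| 1 with h | h
    · linarith [pow_le_one₀ (abs_nonneg z) h (n := k), sq_nonneg z]
    · rw [← sq_abs]; linarith [pow_le_pow_right₀ h.le hk]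
  have hre : y.re * z ^ k ≤ ‖y‖ * |z| ^ k := by
    rw [← abs_pow]
    exact (le_abs_self _).trans (by rw [abs_mul]; gcongr; exact abs_re_le_norm y)
  rw [norm_mul, norm_cexp_mul_ofReal_pow, norm_cexp_mul_ofReal_pow, norm_pow, norm_real,
    Real.norm_eq_abs, ← Real.exp_add, ← Real.exp_add, Real.exp_le_exp]
  have := mul_le_mul_of_nonneg_left hpow (by positivity : 0 ≤ ‖y‖ + 1)
  linarith [hK z, sq_nonneg z]

theorem differentiable_quarticExpBCF {k : ℕ} (hk : k ≤ 2) :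
    Differentiable ℂ (quarticExpBCF c k) := fun y =>
  have ⟨_, hM⟩ := exists_norm_quarticExp_mul_exp_le hc hk y
  (hasDerivAt_toBCF_mul_cexp (by fun_prop) (by fun_prop) one_pos hM).differentiableAt

end QuarticExp

theorem norm_quarticExp_four_mul_exp_le {c y : ℂ} (z : ℝ) :
    ‖cexp (c * (z : ℂ) ^ 4) * cexp (y * (z : ℂ) ^ 4)‖
      * Real.exp (-(c + y).re * ‖(z : ℂ) ^ 4‖) ≤ 1 := by
  rw [← Complex.exp_add, ← add_mul, norm_cexp_mul_ofReal_pow, norm_pow, norm_real,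
    Real.norm_eq_abs, pow_abs, abs_of_nonneg (by positivity), ← Real.exp_add, neg_mul,
    add_neg_cancel, Real.exp_zero]

theorem differentiableOn_quarticExpBCF_four (c : ℂ) :
    DifferentiableOn ℂ (quarticExpBCF c 4) {y | (c + y).re < 0} := fun y hy =>
  (hasDerivAt_toBCF_mul_cexp (by fun_prop) (by fun_prop) (neg_pos.2 hy)
    norm_quarticExp_four_mul_exp_le).differentiableAt.differentiableWithinAt

theorem coe_quarticExpBCF {c y : ℂ} {k : ℕ} {ε M : ℝ} (hε : 0 ≤ ε)
    (hM : ∀ z : ℝ, ‖cexp (c * (z : ℂ) ^ 4) * cexp (y * (z : ℂ) ^ k)‖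
      * Real.exp (ε * ‖(z : ℂ) ^ k‖) ≤ M) :
    ⇑(quarticExpBCF c k y) = fun z : ℝ => cexp (c * (z : ℂ) ^ 4) * cexp (y * (z : ℂ) ^ k) :=
  coe_toBCF_mul_cexp (by fun_prop) (by fun_prop) hε hM

theorem pearcey_eq_weightedIntegralCLM {c : ℂ} (hc : c.re < 0) (x₁ x₂ : ℂ) {η : ℂ}
    (hη : (c + (η - 4 * c)).re < 0) :
    pearcey x₁ x₂ η = weightedIntegralCLM _ (integrable_cexp_quartic hc)
      (quarticExpBCF c 4 (η - 4 * c) * quarticExpBCF c 2 (η * x₂) * quarticExpBCF c 1 (η * x₁)) := by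
  obtain ⟨_, h₂⟩ := exists_norm_quarticExp_mul_exp_le hc le_rfl (η * x₂)
  obtain ⟨_, h₁⟩ := exists_norm_quarticExp_mul_exp_le hc one_le_two (η * x₁)
  rw [weightedIntegralCLM_apply, pearcey]
  congr 1 with z
  simp only [BoundedContinuousFunction.coe_mul, Pi.mul_apply,
    coe_quarticExpBCF (neg_pos.2 hη).le norm_quarticExp_four_mul_exp_le,
    coe_quarticExpBCF zero_le_one h₂, coe_quarticExpBCF zero_le_one h₁, ← Complex.exp_add]
  ring_nf

theorem analyticAt_pearcey {p : ℂ × ℂ × ℂ} (hp : p.2.2.re < 0) :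
    AnalyticAt ℂ (fun q : ℂ × ℂ × ℂ => pearcey q.1 q.2.1 q.2.2) p := by
  set c := p.2.2 / 4
  have hc : c.re < 0 := by simp only [c, div_ofNat_re]; linarith
  have hU : IsOpen {q : ℂ × ℂ × ℂ | (c + (q.2.2 - 4 * c)).re < 0} :=
    isOpen_lt (by fun_prop) continuous_const
  have hpU : (c + (p.2.2 - 4 * c)).re < 0 := by
    rwa [show 4 * c = p.2.2 by simp only [c]; ring, sub_self, add_zero]
  have h₄ : AnalyticAt ℂ (quarticExpBCF c 4) (p.2.2 - 4 * c) :=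
    (differentiableOn_quarticExpBCF_four c).analyticAt
      ((isOpen_lt (by fun_prop) continuous_const).mem_nhds hpU)
  have h₂ := (differentiable_quarticExpBCF hc le_rfl).analyticAt (p.2.2 * p.2.1)
  have h₁ := (differentiable_quarticExpBCF hc one_le_two).analyticAt (p.2.2 * p.1)
  have hprod : AnalyticAt ℂ (fun q : ℂ × ℂ × ℂ => quarticExpBCF c 4 (q.2.2 - 4 * c)
      * quarticExpBCF c 2 (q.2.2 * q.2.1) * quarticExpBCF c 1 (q.2.2 * q.1)) p := by
    have hη : AnalyticAt ℂ (fun q : ℂ × ℂ × ℂ => q.2.2) p := analyticAt_snd.comp analyticAt_snd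
    have hx₂ : AnalyticAt ℂ (fun q : ℂ × ℂ × ℂ => q.2.1) p := analyticAt_fst.comp analyticAt_snd
    exact ((h₄.fun_comp (f := fun q : ℂ × ℂ × ℂ => q.2.2 - 4 * c)
      (hη.fun_sub analyticAt_const)).fun_mul (h₂.fun_comp (f := fun q : ℂ × ℂ × ℂ => q.2.2 * q.2.1)
      (hη.fun_mul hx₂))).fun_mul
      (h₁.fun_comp (f := fun q : ℂ × ℂ × ℂ => q.2.2 * q.1) (hη.fun_mul analyticAt_fst))
  refine (((weightedIntegralCLM _ (integrable_cexp_quartic hc)).analyticAt _).comp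
    hprod).congr ?_
  filter_upwards [hU.mem_nhds hpU] with q hq
  exact (pearcey_eq_weightedIntegralCLM hc q.1 q.2.1 hq).symm

/-- For `Re η < 0` the Pearcey integral converges absolutely, is analytic in
`(x₁,x₂,η)`, and satisfies `P₁u = P₂u = P₃u = 0`. -/
theorem pearcey_integral_properties :
    (∀ x₁ x₂ η : ℂ, η.re < 0 →
      Integrable (fun z : ℝ =>
        Complex.exp (η * ((z : ℂ) ^ 4 + x₂ * (z : ℂ) ^ 2 + x₁ * (z : ℂ))))) ∧
    AnalyticOnNhd ℂ (fun p : ℂ × ℂ × ℂ => pearcey p.1 p.2.1 p.2.2)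
      {p : ℂ × ℂ × ℂ | p.2.2.re < 0} ∧
    (∀ x₁ x₂ η : ℂ, η.re < 0 →
      P1 pearcey x₁ x₂ η = 0 ∧ P2 pearcey x₁ x₂ η = 0 ∧ P3 pearcey x₁ x₂ η = 0) := by
  refine ⟨fun x₁ x₂ η hη => ?_, fun p hp => analyticAt_pearcey hp,
    fun x₁ x₂ η hη => pearcey_pde hη x₁ x₂⟩
  simpa [pearceyKernel] using integrable_pow_mul_pearceyKernel hη x₁ x₂ 0
end

section
/- Let ζ be an analytic function on an open subset U of ℂ² (with coordinates (x₁,x₂)) satisfying 4ζ³ + 2x₂ζ + x₁ = 0 identically on U. Then the function F = (1/4)(3x₁ζ + 2x₂ζ²) satisfies ∂₁F = ζ and ∂₂F = ζ² on U. In other words, F is a primitive of the 1-form ζ dx₁ + ζ² dx₂. -/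
/-- Partial derivative in the first variable `x₁` for functions of two complex variables. -/
noncomputable def E1 (f : ℂ → ℂ → ℂ) : ℂ → ℂ → ℂ :=
  fun a b => deriv (fun w => f w b) a

/-- Partial derivative in the second variable `x₂`. -/
noncomputable def E2 (f : ℂ → ℂ → ℂ) : ℂ → ℂ → ℂ :=
  fun a b => deriv (fun w => f a w) b

/-!
Differentiating `4ζ³ + 2x₂ζ + x₁ = 0` along a curve gives `(12ζ² + 2x₂) dζ = -(dx₁ + 2ζ dx₂)`.
On the other hand `dϖ = ¼ (3ζ dx₁ + 2ζ² dx₂) + ¼ (3x₁ + 4x₂ζ) dζ`, and on the cubic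
`3x₁ + 4x₂ζ = -ζ (12ζ² + 2x₂)`, so the `dζ` term equals `¼ (ζ dx₁ + 2ζ² dx₂)` and
`dϖ = ζ dx₁ + ζ² dx₂`. The partial derivatives are the cases of the curves `w ↦ (w, x₂)` and
`w ↦ (x₁, w)`.
-/

open Filter Topology

section Pearcey

variable {𝕜 : Type*} [NontriviallyNormedField 𝕜]

def pearceyCubic (x₁ x₂ z : 𝕜) : 𝕜 := 4 * z ^ 3 + 2 * x₂ * z + x₁

def pearceyPrimitive (x₁ x₂ z : 𝕜) : 𝕜 := (1 / 4) * (3 * x₁ * z + 2 * x₂ * z ^ 2)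

variable {x₁ x₂ z : 𝕜 → 𝕜} {u v d t : 𝕜}

theorem HasDerivAt.pearceyCubic (hx₁ : HasDerivAt x₁ u t) (hx₂ : HasDerivAt x₂ v t)
    (hz : HasDerivAt z d t) :
    HasDerivAt (fun s => pearceyCubic (x₁ s) (x₂ s) (z s))
      (4 * (3 * z t ^ 2 * d) + 2 * (v * z t + x₂ t * d) + u) t :=
  ((((hz.pow 3).const_mul 4).add ((hx₂.const_mul 2).mul hz)).add hx₁).congr_deriv (by ring)

theorem HasDerivAt.pearceyPrimitive (hx₁ : HasDerivAt x₁ u t) (hx₂ : HasDerivAt x₂ v t)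
    (hz : HasDerivAt z d t) :
    HasDerivAt (fun s => pearceyPrimitive (x₁ s) (x₂ s) (z s))
      ((1 / 4) * (3 * (u * z t + x₁ t * d) + 2 * (v * z t ^ 2 + x₂ t * (2 * z t * d)))) t :=
  ((((hx₁.const_mul 3).mul hz).add ((hx₂.const_mul 2).mul (hz.pow 2))).const_mul
    (1 / 4)).congr_deriv (by rw [Pi.pow_apply]; ring)

theorem hasDerivAt_pearceyPrimitive_of_cubic_eq_zero [CharZero 𝕜] (hx₁ : HasDerivAt x₁ u t)
    (hx₂ : HasDerivAt x₂ v t) (hz : HasDerivAt z d t)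
    (hroot : ∀ᶠ s in 𝓝 t, pearceyCubic (x₁ s) (x₂ s) (z s) = 0) :
    HasDerivAt (fun s => pearceyPrimitive (x₁ s) (x₂ s) (z s)) (z t * u + z t ^ 2 * v) t := by
  have hcubic : pearceyCubic (x₁ t) (x₂ t) (z t) = 0 := hroot.self_of_nhds
  have hcubic_deriv : 4 * (3 * z t ^ 2 * d) + 2 * (v * z t + x₂ t * d) + u = 0 := by
    have hzero : (fun s => pearceyCubic (x₁ s) (x₂ s) (z s)) =ᶠ[𝓝 t] fun _ => 0 := hroot
    rw [← (hx₁.pearceyCubic hx₂ hz).deriv, hzero.deriv_eq, deriv_const]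
  convert hx₁.pearceyPrimitive hx₂ hz using 1
  unfold pearceyCubic at hcubic
  linear_combination (z t / 4) * hcubic_deriv - (3 * d / 4) * hcubic

theorem hasDerivAt_pearceyPrimitive_comp [CharZero 𝕜] {ζ : 𝕜 × 𝕜 → 𝕜}
    (hx₁ : HasDerivAt x₁ u t) (hx₂ : HasDerivAt x₂ v t) (hζ : DifferentiableAt 𝕜 ζ (x₁ t, x₂ t))
    (hroot : ∀ᶠ q in 𝓝 (x₁ t, x₂ t), pearceyCubic q.1 q.2 (ζ q) = 0) :
    HasDerivAt (fun s => pearceyPrimitive (x₁ s) (x₂ s) (ζ (x₁ s, x₂ s)))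
      (ζ (x₁ t, x₂ t) * u + ζ (x₁ t, x₂ t) ^ 2 * v) t :=
  have hγ := hx₁.prodMk hx₂
  hasDerivAt_pearceyPrimitive_of_cubic_eq_zero hx₁ hx₂ (hζ.comp t hγ.differentiableAt).hasDerivAt
    (hγ.continuousAt.tendsto.eventually hroot)

end Pearcey

/-- If `ζ` is an analytic branch of the cubic `4ζ³ + 2x₂ζ + x₁ = 0`, then
`F = (1/4)(3x₁ζ + 2x₂ζ²)` is a primitive of the 1-form `ζ dx₁ + ζ² dx₂`:
`∂₁F = ζ` and `∂₂F = ζ²`. -/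
theorem pearcey_leading_primitive
    (U : Set (ℂ × ℂ)) (hU : IsOpen U)
    (ζ : ℂ → ℂ → ℂ)
    (hζ : AnalyticOnNhd ℂ (fun p : ℂ × ℂ => ζ p.1 p.2) U)
    (hroot : ∀ p : ℂ × ℂ, p ∈ U → 4 * (ζ p.1 p.2) ^ 3 + 2 * p.2 * ζ p.1 p.2 + p.1 = 0) :
    ∀ p : ℂ × ℂ, p ∈ U →
      E1 (fun a b => (1 / 4) * (3 * a * ζ a b + 2 * b * (ζ a b) ^ 2)) p.1 p.2 = ζ p.1 p.2 ∧
      E2 (fun a b => (1 / 4) * (3 * a * ζ a b + 2 * b * (ζ a b) ^ 2)) p.1 p.2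
        = (ζ p.1 p.2) ^ 2 := by
  rintro ⟨a, b⟩ hp
  have hd : DifferentiableAt ℂ (fun q : ℂ × ℂ => ζ q.1 q.2) (a, b) := (hζ _ hp).differentiableAt
  have hnear : ∀ᶠ q in 𝓝 (a, b), pearceyCubic q.1 q.2 (ζ q.1 q.2) = 0 :=
    eventually_of_mem (hU.mem_nhds hp) hroot
  constructor
  · exact ((hasDerivAt_pearceyPrimitive_comp (hasDerivAt_id a) (hasDerivAt_const a b) hd
      hnear).deriv).trans (by simp)
  · exact ((hasDerivAt_pearceyPrimitive_comp (hasDerivAt_const b a) (hasDerivAt_id b) hd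
      hnear).deriv).trans (by simp)
end

section
/- Let x₁, x₂ ∈ ℂ and let ζ₁ ≠ ζ₂ be two distinct complex roots of the cubic equation 4ζ³ + 2x₂ζ + x₁ = 0. Then the quantity F = (ζ₁ − ζ₂)(3x₁ + 2x₂(ζ₁ + ζ₂)) satisfies the sextic equation 16F⁶ + 32x₂(27x₁² − x₂³)F⁴ + 16x₂²(27x₁² − x₂³)²F² + x₁²(27x₁² + 8x₂³)³ = 0. -/
/-!
Two distinct roots `a, b` of `4ζ³ + 2x₂ζ + x₁` determine the cubic: with the third root
`c = -(a + b)`, Vieta gives `x₁ = -4abc` and `x₂ = 2(ab + ac + bc)`. In these coordinates the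
sextic, as a polynomial in `F`, factors as `16 ∏ (F² - F_{uv}²)` over the three pairs of roots,
so it vanishes at `F = F_{ab}`.
-/

section Sextic

variable {R : Type*} [CommRing R]

/-- Four times the difference of the primitives of the leading-order 1-forms on the
branches `u` and `v`. -/
def pearceyF (x₁ x₂ u v : R) : R := (u - v) * (3 * x₁ + 2 * x₂ * (u + v))

def pearceySextic (x₁ x₂ F : R) : R :=
  16 * F ^ 6 + 32 * x₂ * (27 * x₁ ^ 2 - x₂ ^ 3) * F ^ 4
    + 16 * x₂ ^ 2 * (27 * x₁ ^ 2 - x₂ ^ 3) ^ 2 * F ^ 2 + x₁ ^ 2 * (27 * x₁ ^ 2 + 8 * x₂ ^ 3) ^ 3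

theorem pearceySextic_vieta_eq_prod {a b c : R} (hc : a + b + c = 0) (F : R) :
    let x₁ := -4 * a * b * c
    let x₂ := 2 * (a * b + a * c + b * c)
    pearceySextic x₁ x₂ F = 16 * (F ^ 2 - pearceyF x₁ x₂ a b ^ 2)
      * (F ^ 2 - pearceyF x₁ x₂ b c ^ 2) * (F ^ 2 - pearceyF x₁ x₂ a c ^ 2) := by
  obtain rfl : c = -(a + b) := by linear_combination hc
  simp only [pearceySextic, pearceyF]
  ring

theorem pearceySextic_vieta_pearceyF_eq_zero {a b c : R} (hc : a + b + c = 0) :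
    let x₁ := -4 * a * b * c
    let x₂ := 2 * (a * b + a * c + b * c)
    pearceySextic x₁ x₂ (pearceyF x₁ x₂ a b) = 0 := by
  simp only [pearceySextic_vieta_eq_prod hc, sub_self, mul_zero, zero_mul]

end Sextic

theorem depressed_cubic_coeffs_eq_of_roots {K : Type*} [Field K] [NeZero (2 : K)]
    {x₁ x₂ a b c : K} (hab : a ≠ b) (hc : a + b + c = 0)
    (ha : 4 * a ^ 3 + 2 * x₂ * a + x₁ = 0) (hb : 4 * b ^ 3 + 2 * x₂ * b + x₁ = 0) :
    x₁ = -4 * a * b * c ∧ x₂ = 2 * (a * b + a * c + b * c) := by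
  obtain rfl : c = -(a + b) := by linear_combination hc
  have hdiff : (a - b) * (2 * (x₂ + 2 * (a ^ 2 + a * b + b ^ 2))) = 0 := by
    linear_combination ha - hb
  have hx₂ : x₂ + 2 * (a ^ 2 + a * b + b ^ 2) = 0 :=
    (mul_eq_zero.mp ((mul_eq_zero.mp hdiff).resolve_left (sub_ne_zero.mpr hab))).resolve_left
      two_ne_zero
  constructor
  · linear_combination ha - 2 * a * hx₂
  · linear_combination hx₂

/-- For two distinct roots `ζ₁ ≠ ζ₂` of the cubic `4ζ³ + 2x₂ζ + x₁ = 0`, the quantity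
`F = (ζ₁ − ζ₂)(3x₁ + 2x₂(ζ₁ + ζ₂))` satisfies the sextic equation describing the
Stokes set of the Pearcey system. -/
theorem pearcey_stokes_sextic
    (x₁ x₂ ζ₁ ζ₂ : ℂ) (hne : ζ₁ ≠ ζ₂)
    (h1 : 4 * ζ₁ ^ 3 + 2 * x₂ * ζ₁ + x₁ = 0)
    (h2 : 4 * ζ₂ ^ 3 + 2 * x₂ * ζ₂ + x₁ = 0) :
    16 * ((ζ₁ - ζ₂) * (3 * x₁ + 2 * x₂ * (ζ₁ + ζ₂))) ^ 6
      + 32 * x₂ * (27 * x₁ ^ 2 - x₂ ^ 3)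
          * ((ζ₁ - ζ₂) * (3 * x₁ + 2 * x₂ * (ζ₁ + ζ₂))) ^ 4
      + 16 * x₂ ^ 2 * (27 * x₁ ^ 2 - x₂ ^ 3) ^ 2
          * ((ζ₁ - ζ₂) * (3 * x₁ + 2 * x₂ * (ζ₁ + ζ₂))) ^ 2
      + x₁ ^ 2 * (27 * x₁ ^ 2 + 8 * x₂ ^ 3) ^ 3 = 0 := by
  have hc : ζ₁ + ζ₂ + -(ζ₁ + ζ₂) = 0 := add_neg_cancel _
  obtain ⟨rfl, rfl⟩ := depressed_cubic_coeffs_eq_of_roots hne hc h1 h2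
  exact pearceySextic_vieta_pearceyF_eq_zero hc
end

section
/- Define Φ(s,h) = (256s³ − 27)h⁴ + 18h² − 8h + 1 and p₃ = 3·2^{−8/3} = 3/4^{4/3}. For every real s with 0 < s < p₃ there exist real numbers λ₁ > 0, λ₂ ≠ 0, λ₃ > 0, λ₄ < 0 such that Φ(s,h) = (256s³ − 27)(h − (λ₁ + iλ₂))(h − (λ₁ − iλ₂))(h − λ₃)(h − λ₄) for all h ∈ ℂ. In other words, for 0 < s < p₃ the quartic equation Φ(s,h) = 0 in h has exactly one positive real root, one negative real root, and two non-real complex conjugate roots whose common real part is positive. -/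
open Complex

/-- Key inequality: for `0 < b < 27`, `v > 0` with `(bv³−18v)² + 4bv² = 64`,
we have `bv³ − 36v + 16 > 0`. -/
lemma pearcey_key_ineq (b v : ℝ) (hb0 : 0 < b) (hb27 : b < 27) (hv : 0 < v)
    (heq : (b * v ^ 3 - 18 * v) ^ 2 + 4 * b * v ^ 2 = 64) :
    0 < b * v ^ 3 - 36 * v + 16 := by
  set w : ℝ := b * v ^ 2 with hw
  have hwpos : 0 < w := by positivity
  have h1 : v ^ 2 * (w - 18) ^ 2 = 64 - 4 * w := by
    rw [hw]; linear_combination heq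
  have hw16 : w < 16 := by
    nlinarith [sq_nonneg (v * (w - 18)), mul_pos hv hv, sq_nonneg (w - 18)]
  have hw12 : w ≠ 12 := by
    intro h
    have hv2 : v ^ 2 = 4 / 9 := by nlinarith [h1, h]
    have : b = 27 := by
      have : b * (4 / 9) = 12 := by rw [← hv2]; rw [hw] at h; linarith
      linarith
    linarith
  have h18 : 0 < (18 - w) ^ 2 := by nlinarith
  have hdiff : 0 < 4 * w * (w - 12) ^ 2 := by
    have : 0 < (w - 12) ^ 2 := by
      rcases lt_or_gt_of_ne hw12 with h | h <;> nlinarith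
    positivity
  have hA : ((36 - w) * v) ^ 2 * (18 - w) ^ 2 = (36 - w) ^ 2 * (64 - 4 * w) := by
    linear_combination (36 - w) ^ 2 * h1
  have hsq : ((36 - w) * v) ^ 2 < 256 := by
    have h2 : ((36 - w) * v) ^ 2 * (18 - w) ^ 2 < 256 * (18 - w) ^ 2 := by
      nlinarith [hA, hdiff]
    exact lt_of_mul_lt_mul_right (by nlinarith [h2]) (le_of_lt h18)
  have hpos : 0 < (36 - w) * v := by
    have : 0 < 36 - w := by linarith
    positivity
  have : (36 - w) * v < 16 := by nlinarith [hsq, hpos]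
  nlinarith [this]

set_option maxHeartbeats 1000000 in
/-- For real `0 < s < p₃ = 3/4^{4/3}`, the quartic `Φ(s,h) = (256s³−27)h⁴ + 18h² − 8h + 1`
factors as `(256s³−27)(h−(λ₁+iλ₂))(h−(λ₁−iλ₂))(h−λ₃)(h−λ₄)` with real `λ₁ > 0`,
`λ₂ ≠ 0`, `λ₃ > 0`, `λ₄ < 0`: it has exactly one positive real root, one negative real
root, and two non-real conjugate roots with positive real part. -/
theorem pearcey_phi_root_structure
    (s : ℝ) (hs0 : 0 < s) (hs1 : s < 3 / (4 : ℝ) ^ ((4 : ℝ) / 3)) :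
    ∃ l₁ l₂ l₃ l₄ : ℝ, 0 < l₁ ∧ l₂ ≠ 0 ∧ 0 < l₃ ∧ l₄ < 0 ∧
      ∀ h : ℂ,
        (256 * (s : ℂ) ^ 3 - 27) * h ^ 4 + 18 * h ^ 2 - 8 * h + 1
          = (256 * (s : ℂ) ^ 3 - 27)
              * (h - ((l₁ : ℂ) + I * (l₂ : ℂ))) * (h - ((l₁ : ℂ) - I * (l₂ : ℂ)))
              * (h - (l₃ : ℂ)) * (h - (l₄ : ℂ)) := by
  -- b = 27 - 256 s³ lies in (0, 27)
  have hc : ((4 : ℝ) ^ ((4 : ℝ) / 3)) ^ (3 : ℕ) = 256 := by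
    rw [← Real.rpow_natCast ((4 : ℝ) ^ ((4 : ℝ) / 3)) 3,
      ← Real.rpow_mul (by norm_num : (0:ℝ) ≤ 4)]
    norm_num
  have hs3 : 256 * s ^ 3 < 27 := by
    have h1 : s ^ 3 < (3 / (4 : ℝ) ^ ((4 : ℝ) / 3)) ^ 3 :=
      pow_lt_pow_left₀ hs1 hs0.le (by norm_num)
    have h2 : (3 / (4 : ℝ) ^ ((4 : ℝ) / 3)) ^ 3 = 27 / 256 := by
      rw [div_pow, hc]; norm_num
    nlinarith [h1, h2]
  obtain ⟨b, hbdef⟩ : ∃ b : ℝ, b = 27 - 256 * s ^ 3 := ⟨_, rfl⟩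
  have hb0 : 0 < b := by rw [hbdef]; linarith
  have hb27 : b < 27 := by rw [hbdef]; nlinarith [hs0, pow_pos hs0 3]
  -- Find v > 0 with (b v³ - 18 v)² + 4 b v² = 64 by IVT
  have hvstar : (0:ℝ) ≤ Real.sqrt (18 / b) := Real.sqrt_nonneg _
  have hvstar_sq : (Real.sqrt (18 / b)) ^ 2 = 18 / b :=
    Real.sq_sqrt (by positivity)
  obtain ⟨v, hvmem, hveq0⟩ : ∃ v ∈ Set.Icc (0:ℝ) (Real.sqrt (18 / b)),
      (fun v => (b * v ^ 3 - 18 * v) ^ 2 + 4 * b * v ^ 2 - 64) v = 0 := by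
    have hgc : ContinuousOn (fun v : ℝ => (b * v ^ 3 - 18 * v) ^ 2 + 4 * b * v ^ 2 - 64)
        (Set.Icc 0 (Real.sqrt (18 / b))) := by fun_prop
    have := intermediate_value_Icc hvstar hgc
    apply this
    refine ⟨?_, ?_⟩
    · show ((b * (0:ℝ) ^ 3 - 18 * 0) ^ 2 + 4 * b * (0:ℝ) ^ 2 - 64 : ℝ) ≤ 0
      norm_num
    · show (0:ℝ) ≤ (b * (Real.sqrt (18 / b)) ^ 3 - 18 * Real.sqrt (18 / b)) ^ 2
        + 4 * b * (Real.sqrt (18 / b)) ^ 2 - 64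
      have h3 : (Real.sqrt (18 / b)) ^ 3 = (18 / b) * Real.sqrt (18 / b) := by
        rw [pow_succ, hvstar_sq]
      rw [h3, hvstar_sq]
      have hb' : b ≠ 0 := hb0.ne'
      have hb18 : b * (18 / b) = 18 := by field_simp
      have h4 : b * (18 / b * Real.sqrt (18 / b)) - 18 * Real.sqrt (18 / b) = 0 := by
        rw [show b * (18 / b * Real.sqrt (18 / b))
            = b * (18 / b) * Real.sqrt (18 / b) by ring, hb18]
        ring
      rw [h4, show (4:ℝ) * b * (18 / b) = 4 * (b * (18 / b)) by ring, hb18]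
      norm_num
  have hveq : (b * v ^ 3 - 18 * v) ^ 2 + 4 * b * v ^ 2 = 64 := by
    have h0 : (b * v ^ 3 - 18 * v) ^ 2 + 4 * b * v ^ 2 - 64 = 0 := hveq0
    linarith
  have hv0 : 0 < v := by
    rcases lt_or_eq_of_le hvmem.1 with h | h
    · exact h
    · exfalso; rw [← h] at hveq; norm_num at hveq
  have hbne : b ≠ 0 := hb0.ne'
  have hvne : v ≠ 0 := hv0.ne'
  -- Quadratic factors: h² + v h + q and h² - v h + r
  obtain ⟨q, hqdef⟩ : ∃ q : ℝ, q = (v ^ 2 - 18 / b - 8 / (b * v)) / 2 := ⟨_, rfl⟩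
  obtain ⟨r, hrdef⟩ : ∃ r : ℝ, r = (v ^ 2 - 18 / b + 8 / (b * v)) / 2 := ⟨_, rfl⟩
  have e1 : b * (q + r) = b * v ^ 2 - 18 := by
    rw [hqdef, hrdef]; field_simp; ring
  have e2 : b * v * (r - q) = 8 := by
    rw [hqdef, hrdef]; field_simp; ring
  have e3 : b * (q * r) = -1 := by
    rw [hqdef, hrdef]
    field_simp
    linear_combination hveq
  have hq0 : q < 0 := by
    have hqr : q * r < 0 := by
      have h4 : q * r = -1 / b := by
        field_simp
        linarith [e3]
      rw [h4]; exact div_neg_of_neg_of_pos (by norm_num) hb0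
    have hrq : q < r := by
      have h8 : 0 < 8 / (b * v) := by positivity
      rw [hqdef, hrdef]; linarith
    nlinarith [hqr, hrq]
  -- Key inequality: r - v²/4 > 0
  have hkey : 0 < b * v ^ 3 - 36 * v + 16 := pearcey_key_ineq b v hb0 hb27 hv0 hveq
  have hrv : 0 < r - v ^ 2 / 4 := by
    have h5 : r - v ^ 2 / 4 = (b * v ^ 3 - 36 * v + 16) / (4 * (b * v)) := by
      rw [hrdef]; field_simp; ring
    rw [h5]; positivity
  -- Construct the roots
  obtain ⟨l₂, hl2def⟩ : ∃ x : ℝ, x = Real.sqrt (r - v ^ 2 / 4) := ⟨_, rfl⟩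
  have hl2sq : l₂ ^ 2 = r - v ^ 2 / 4 := by rw [hl2def]; exact Real.sq_sqrt hrv.le
  have hl2pos : 0 < l₂ := by rw [hl2def]; exact Real.sqrt_pos.mpr hrv
  obtain ⟨d, hddef⟩ : ∃ x : ℝ, x = Real.sqrt (v ^ 2 - 4 * q) := ⟨_, rfl⟩
  have hdsq : d ^ 2 = v ^ 2 - 4 * q := by rw [hddef]; exact Real.sq_sqrt (by nlinarith)
  have hdv : v < d := by
    have h1 : v ^ 2 < v ^ 2 - 4 * q := by linarith
    have h2 := Real.sqrt_lt_sqrt (sq_nonneg v) h1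
    rw [Real.sqrt_sq hv0.le] at h2
    rw [hddef]; exact h2
  refine ⟨v / 2, l₂, (-v + d) / 2, (-v - d) / 2, ?_, hl2pos.ne', ?_, ?_, ?_⟩
  · positivity
  · linarith
  · nlinarith [hdv, hv0]
  intro h
  -- cast identities to ℂ
  have hbC : (256 * (s : ℂ) ^ 3 - 27) = -(b : ℂ) := by
    rw [hbdef]; push_cast; ring
  have e1' : (b : ℂ) * ((q : ℂ) + (r : ℂ)) = (b : ℂ) * (v : ℂ) ^ 2 - 18 := by
    exact_mod_cast e1
  have e2' : (b : ℂ) * (v : ℂ) * ((r : ℂ) - (q : ℂ)) = 8 := by exact_mod_cast e2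
  have e3' : (b : ℂ) * ((q : ℂ) * (r : ℂ)) = -1 := by exact_mod_cast e3
  have el2' : (l₂ : ℂ) ^ 2 = (r : ℂ) - (v : ℂ) ^ 2 / 4 := by exact_mod_cast hl2sq
  have ed' : (d : ℂ) ^ 2 = (v : ℂ) ^ 2 - 4 * (q : ℂ) := by exact_mod_cast hdsq
  have hI : (I : ℂ) ^ 2 = -1 := Complex.I_sq
  rw [hbC]
  push_cast
  have F1 : (h - ((v : ℂ) / 2 + I * (l₂ : ℂ))) * (h - ((v : ℂ) / 2 - I * (l₂ : ℂ)))
      = h ^ 2 - (v : ℂ) * h + (r : ℂ) := by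
    linear_combination (-(l₂ : ℂ) ^ 2) * hI + el2'
  have F2 : (h - ((-(v : ℂ) + (d : ℂ)) / 2)) * (h - ((-(v : ℂ) - (d : ℂ)) / 2))
      = h ^ 2 + (v : ℂ) * h + (q : ℂ) := by
    linear_combination (-(1 : ℂ) / 4) * ed'
  linear_combination (h ^ 2) * e1' + h * e2' + e3'
    + (b : ℂ) * ((h - ((-(v : ℂ) + (d : ℂ)) / 2)) * (h - ((-(v : ℂ) - (d : ℂ)) / 2))) * F1
    + (b : ℂ) * (h ^ 2 - (v : ℂ) * h + (r : ℂ)) * F2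
end
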